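/- For every h ∈ ℕ: (a) φ(h) = S⁻¹(ψ(0,h))² · (h+1) = R(ψ(0,h))² · (h+1), where the square of the reversal of ψ(0,h) is followed by the single letter h+1; (b) the word obtained from φ(h) by deleting its first letter (which is h) and its last letter (which is h+1) is a palindrome. -/
import Mathlib

/-- S⁻¹: move the last letter of a nonempty word to the front. -/
def sInv (w : List ℕ) : List ℕ := w.rotate (w.length - 1)

/-- Apply a substitution `f` letterwise to a word (the morphism determined by `f`). -/
def applyM (f : ℕ → List ℕ) (w : List ℕ) : List ℕ := (w.map f).flatten

/-- Fuel-indexed approximation of the morphism φ: `phiAux n` agrees with φ on all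
letters `c < n`.  (Computing φ^c(00) only uses φ on letters smaller than `c`, so the
recursion is well-founded in the fuel.) -/
def phiAux : ℕ → ℕ → List ℕ
  | 0, _ => []
  | n + 1, c => sInv ((applyM (phiAux n))^[c] [0, 0]) ++ [c + 1]

/-- The morphism φ on letters: φ(h) = S⁻¹(φ^h(00))·(h+1).
In particular φ(0) = 001 and φ(1) = 1001002. -/
def phi (c : ℕ) : List ℕ := phiAux (c + 1) c

/-- The morphism φ on words. -/
def phiW (w : List ℕ) : List ℕ := applyM phi w

/-- ψ(h,k) = φ^(k−h)(h); in particular ψ(0,h) = φ^h(0). -/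
def psi (h k : ℕ) : List ℕ := phiW^[k - h] [h]

/-! ### Auxiliary definitions -/

/-- The "mirror" substitution: τ(c) is the reversal of φ(c). -/
def tau (c : ℕ) : List ℕ := (phi c).reverse

/-- τ as a morphism on words. -/
def tauW (w : List ℕ) : List ℕ := applyM tau w

/-- u h = φ^h(0). -/
def uw (h : ℕ) : List ℕ := phiW^[h] [0]

/-- d h = u h with its last letter removed. -/
def dw (h : ℕ) : List ℕ := (uw h).dropLast

/-! ### Basic lemmas about `applyM` -/

lemma applyM_nil (f : ℕ → List ℕ) : applyM f [] = [] := rfl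

lemma applyM_append (f : ℕ → List ℕ) (a b : List ℕ) :
    applyM f (a ++ b) = applyM f a ++ applyM f b := by
  simp [applyM]

lemma applyM_congr {f g : ℕ → List ℕ} {w : List ℕ} (h : ∀ x ∈ w, f x = g x) :
    applyM f w = applyM g w := by
  unfold applyM
  rw [List.map_congr_left h]

lemma applyM_reverse (f : ℕ → List ℕ) (w : List ℕ) :
    (applyM f w).reverse = applyM (fun c => (f c).reverse) w.reverse := by
  induction w with
  | nil => rfl
  | cons c w ih =>
    rw [show applyM f (c :: w) = f c ++ applyM f w from rfl, List.reverse_cons,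
      List.reverse_append, applyM_append, ih]
    simp [applyM]

lemma phiW_nil : phiW [] = [] := rfl
lemma phiW_cons (c : ℕ) (w : List ℕ) : phiW (c :: w) = phi c ++ phiW w := rfl
lemma phiW_append (a b : List ℕ) : phiW (a ++ b) = phiW a ++ phiW b := applyM_append _ _ _
lemma phiW_singleton (c : ℕ) : phiW [c] = phi c := by simp [phiW, applyM]
lemma tauW_nil : tauW [] = [] := rfl
lemma tauW_cons (c : ℕ) (w : List ℕ) : tauW (c :: w) = tau c ++ tauW w := rfl
lemma tauW_append (a b : List ℕ) : tauW (a ++ b) = tauW a ++ tauW b := applyM_append _ _ _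
lemma tauW_singleton (c : ℕ) : tauW [c] = tau c := by simp [tauW, applyM]

lemma phiW_reverse (w : List ℕ) : (phiW w).reverse = tauW w.reverse :=
  applyM_reverse phi w

lemma comm_words {w : List ℕ} (h : ∀ c ∈ w, tauW (phi c) = phiW (tau c)) :
    tauW (phiW w) = phiW (tauW w) := by
  induction w with
  | nil => rfl
  | cons c w ih =>
    rw [phiW_cons, tauW_cons, tauW_append, phiW_append,
      h c (by simp), ih (fun c hc => h c (by simp [hc]))]

lemma sInv_concat (w : List ℕ) (y : ℕ) : sInv (w ++ [y]) = y :: w := by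
  unfold sInv
  rw [List.length_append]
  simp only [List.length_singleton, Nat.add_sub_cancel]
  rw [List.rotate_eq_drop_append_take (by simp), List.drop_left, List.take_left]
  rfl

lemma uw_succ (k : ℕ) : uw (k + 1) = phiW (uw k) :=
  Function.iterate_succ_apply' phiW k [0]

/-! ### The master invariant -/

def Bundle (h : ℕ) : Prop :=
  uw h = dw h ++ [h] ∧
  (dw h).reverse = dw h ∧
  (∀ x ∈ dw h, x < h) ∧
  (∀ n, h < n → phiAux n h = phi h) ∧
  phi h = (h :: (dw h ++ [h] ++ dw h)) ++ [h + 1] ∧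
  (∀ c < h, tauW (phi c) = phiW (tau c)) ∧
  (h = 0 ∨ ∃ W : List ℕ, W.reverse = W ∧
     phiW (dw h) = uw h ++ uw h ++ W ∧
     tauW (uw h) ++ tauW (uw h) ++ tauW W =
       phiW W ++ phiW ((uw h).reverse) ++ phiW ((uw h).reverse))

lemma master (h : ℕ) : Bundle h := by
  induction h using Nat.strong_induction_on with
  | _ h IH =>
  obtain _ | m := h
  · -- base case h = 0
    refine ⟨rfl, rfl, by intro x hx; simp [dw, uw] at hx, ?_, by decide, by omega, Or.inl rfl⟩
    intro n hn
    obtain ⟨k, rfl⟩ : ∃ k, n = k + 1 := ⟨n - 1, by omega⟩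
    rfl
  -- inductive step, h = m + 1
  obtain ⟨Am, Bm, Dm, Fm, FORMm, Gm, Cm⟩ := IH m (Nat.lt_succ_self m)
  -- structure of u (m+1) and d (m+1)
  have hE : uw (m + 1) = (phiW (dw m) ++ (m :: (dw m ++ [m] ++ dw m))) ++ [m + 1] := by
    rw [uw_succ]
    conv_lhs => rw [Am]
    rw [phiW_append, phiW_singleton, FORMm]
    simp [List.append_assoc]
  have hdw1 : dw (m + 1) = phiW (dw m) ++ (m :: (dw m ++ [m] ++ dw m)) := by
    rw [dw, hE, List.dropLast_concat]
  have A1 : uw (m + 1) = dw (m + 1) ++ [m + 1] := by rw [hdw1, hE]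
  -- letter bounds
  have mem_phi_le : ∀ c, c < m + 1 → ∀ x ∈ phi c, x ≤ c + 1 := by
    intro c hc x hx
    obtain ⟨Ac, Bc, Dc, Fc, FORMc, Gc, Cc⟩ := IH c hc
    rw [FORMc] at hx
    rcases List.mem_append.mp hx with hx | hx
    · rcases List.mem_cons.mp hx with rfl | hx
      · omega
      rcases List.mem_append.mp hx with hx | hx
      · rcases List.mem_append.mp hx with hx | hx
        · exact Nat.le_succ_of_le (le_of_lt (Dc x hx))
        · obtain rfl := List.mem_singleton.mp hx; omega
      · exact Nat.le_succ_of_le (le_of_lt (Dc x hx))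
    · obtain rfl := List.mem_singleton.mp hx; omega
  have mem_phiW_dwm : ∀ x ∈ phiW (dw m), x ≤ m := by
    intro x hx
    simp only [phiW, applyM, List.mem_flatten, List.mem_map] at hx
    obtain ⟨l, ⟨c, hc, rfl⟩, hxl⟩ := hx
    have hcm : c < m := Dm c hc
    have := mem_phi_le c (by omega) x hxl
    omega
  have D1 : ∀ x ∈ dw (m + 1), x < m + 1 := by
    intro x hx
    rw [hdw1] at hx
    rcases List.mem_append.mp hx with hx | hx
    · exact Nat.lt_succ_of_le (mem_phiW_dwm x hx)
    rcases List.mem_cons.mp hx with rfl | hx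
    · omega
    rcases List.mem_append.mp hx with hx | hx
    · rcases List.mem_append.mp hx with hx | hx
      · exact lt_trans (Dm x hx) (Nat.lt_succ_self m)
      · obtain rfl := List.mem_singleton.mp hx; omega
    · exact lt_trans (Dm x hx) (Nat.lt_succ_self m)
  -- fuel lemma
  have S : ∀ k, k ≤ m + 1 → ∀ n, k ≤ n →
      (applyM (phiAux n))^[k] [0, 0] = uw k ++ uw k := by
    intro k
    induction k with
    | zero => intro _ n _; rfl
    | succ k ihk =>
      intro hk n hn
      rw [Function.iterate_succ_apply', ihk (by omega) n (by omega)]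
      have hlet : ∀ x ∈ uw k, phiAux n x = phi x := by
        intro x hx
        obtain ⟨Ak, Bk, Dk, _⟩ := IH k (by omega)
        have hxk : x ≤ k := by
          rw [Ak] at hx
          rcases List.mem_append.mp hx with hx | hx
          · exact le_of_lt (Dk x hx)
          · simp at hx; omega
        obtain ⟨_, _, _, Fx, _⟩ := IH x (by omega)
        exact Fx n (by omega)
      have h1 : applyM (phiAux n) (uw k) = phiW (uw k) := applyM_congr hlet
      rw [applyM_append, h1, ← uw_succ]
  have key : ∀ n, m + 1 ≤ n →
      phiAux (n + 1) (m + 1) = sInv (uw (m + 1) ++ uw (m + 1)) ++ [m + 1 + 1] := by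
    intro n hn
    show sInv ((applyM (phiAux n))^[m + 1] [0, 0]) ++ [m + 1 + 1] = _
    rw [S (m + 1) le_rfl n hn]
  have F1 : ∀ n, m + 1 < n → phiAux n (m + 1) = phi (m + 1) := by
    intro n hn
    obtain ⟨n', rfl⟩ : ∃ n', n = n' + 1 := ⟨n - 1, by omega⟩
    rw [key n' (by omega)]
    rw [show phi (m + 1) = phiAux (m + 1 + 1) (m + 1) from rfl, key (m + 1) le_rfl]
  have FORM1 : phi (m + 1) = ((m + 1) :: (dw (m + 1) ++ [m + 1] ++ dw (m + 1))) ++ [m + 1 + 1] := by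
    rw [show phi (m + 1) = phiAux (m + 1 + 1) (m + 1) from rfl, key (m + 1) le_rfl]
    conv_lhs => rw [A1]
    rw [show (dw (m + 1) ++ [m + 1]) ++ (dw (m + 1) ++ [m + 1]) =
        ((dw (m + 1) ++ [m + 1]) ++ dw (m + 1)) ++ [m + 1] by simp [List.append_assoc]]
    rw [sInv_concat]
  -- now split on m = 0 or m ≥ 1
  rcases Nat.eq_zero_or_pos m with rfl | hm
  · refine ⟨A1, by decide, D1, F1, FORM1, ?_, Or.inr ⟨[], by decide, by decide, by decide⟩⟩
    intro c hc
    interval_cases c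
    decide
  obtain Cm | ⟨W, c2, c1, e1⟩ := Cm
  · omega
  have t_eq : (uw m).reverse = m :: dw m := by rw [Am]; simp [Bm]
  have hdw1' : dw (m + 1) =
      uw m ++ uw m ++ W ++ (uw m).reverse ++ (uw m).reverse := by
    have h2 : (m : ℕ) :: (dw m ++ [m] ++ dw m) = (uw m).reverse ++ (uw m).reverse := by
      rw [t_eq]; simp [List.append_assoc]
    rw [hdw1, c1, h2]
    simp [List.append_assoc]
  have B1 : (dw (m + 1)).reverse = dw (m + 1) := by
    rw [hdw1']
    simp only [List.reverse_append, List.reverse_reverse, c2]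
    simp [List.append_assoc]
  -- CommM : commutation at letter m
  have tauW_dwm : tauW (dw m) = W ++ (uw m).reverse ++ (uw m).reverse := by
    conv_lhs => rw [← Bm, ← phiW_reverse, c1]
    simp only [List.reverse_append, c2]
    simp [List.append_assoc]
  have tau_m : tau m = (m + 1) :: (dw m ++ [m] ++ (dw m ++ [m])) := by
    rw [tau, FORMm]
    simp [Bm, List.append_assoc]
  have tau_m1 : tau (m + 1) = (m + 1 + 1) :: (dw (m + 1) ++ [m + 1] ++ (dw (m + 1) ++ [m + 1])) := by
    rw [tau, FORM1]
    simp [B1, List.append_assoc]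
  have CommM : tauW (phi m) = phiW (tau m) := by
    conv_lhs => rw [FORMm]
    conv_rhs => rw [tau_m]
    simp only [List.cons_append, tauW_cons, tauW_append, tauW_singleton, tauW_nil,
      phiW_cons, phiW_append, phiW_singleton, phiW_nil]
    rw [tauW_dwm, tau_m, tau_m1, FORM1, FORMm, c1, hdw1']
    simp [Am, Bm, List.append_assoc]
  have G1 : ∀ c < m + 1, tauW (phi c) = phiW (tau c) := by
    intro c hc
    rcases Nat.lt_succ_iff_lt_or_eq.mp hc with h | rfl
    · exact Gm c h
    · exact CommM
  -- commutation on words with letters ≤ m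
  have commX : ∀ x : List ℕ, (∀ a ∈ x, a ≤ m) → tauW (phiW x) = phiW (tauW x) := by
    intro x hx
    apply comm_words
    intro c hc
    exact G1 c (Nat.lt_succ_of_le (hx c hc))
  have lbu : ∀ a ∈ uw m, a ≤ m := by
    intro a ha
    rw [Am] at ha
    rcases List.mem_append.mp ha with ha | ha
    · exact le_of_lt (Dm a ha)
    · simp at ha; omega
  have lbW : ∀ a ∈ W, a ≤ m := by
    intro a ha
    apply mem_phiW_dwm
    rw [c1]
    exact List.mem_append_right _ ha
  have lbWtt : ∀ a ∈ W ++ ((uw m).reverse ++ (uw m).reverse), a ≤ m := by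
    intro a ha
    rcases List.mem_append.mp ha with ha | ha
    · exact lbW a ha
    · rcases List.mem_append.mp ha with ha | ha <;>
      · exact lbu a (List.mem_reverse.mp ha)
  -- the new W
  set t : List ℕ := (uw m).reverse with ht
  set W' : List ℕ := phiW (W ++ (t ++ t)) with hW'
  have e1' : tauW (uw m) ++ (tauW (uw m) ++ tauW W) = phiW W ++ (phiW t ++ phiW t) := by
    have := e1
    simpa [List.append_assoc] using this
  have palW' : W'.reverse = W' := by
    rw [hW', phiW_reverse]
    have hrev : (W ++ (t ++ t)).reverse = uw m ++ (uw m ++ W) := by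
      simp [ht, c2, List.append_assoc]
    rw [hrev, tauW_append, tauW_append, e1']
    rw [phiW_append, phiW_append]
  have c1' : phiW (dw (m + 1)) = uw (m + 1) ++ uw (m + 1) ++ W' := by
    rw [hdw1']
    simp only [phiW_append]
    rw [← uw_succ, hW', phiW_append, phiW_append]
    simp [List.append_assoc]
  have e1'' : tauW (uw (m + 1)) ++ tauW (uw (m + 1)) ++ tauW W' =
      phiW W' ++ phiW ((uw (m + 1)).reverse) ++ phiW ((uw (m + 1)).reverse) := by
    have h1 : tauW (uw (m + 1)) = phiW (tauW (uw m)) := by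
      rw [uw_succ]; exact commX _ lbu
    have h2 : tauW W' = phiW (tauW W ++ (tauW t ++ tauW t)) := by
      rw [hW', commX _ lbWtt, tauW_append, tauW_append]
    have h3 : (uw (m + 1)).reverse = tauW t := by
      rw [uw_succ, phiW_reverse]
    rw [h1, h2, h3, hW']
    calc phiW (tauW (uw m)) ++ phiW (tauW (uw m)) ++ phiW (tauW W ++ (tauW t ++ tauW t))
        = phiW ((tauW (uw m) ++ (tauW (uw m) ++ tauW W)) ++ (tauW t ++ tauW t)) := by
          simp only [phiW_append]; simp [List.append_assoc]
      _ = phiW ((phiW W ++ (phiW t ++ phiW t)) ++ (tauW t ++ tauW t)) := by rw [e1']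
      _ = phiW (phiW (W ++ (t ++ t))) ++ phiW (tauW t) ++ phiW (tauW t) := by
          simp only [phiW_append]; simp [List.append_assoc]
  exact ⟨A1, B1, D1, F1, FORM1, G1, Or.inr ⟨W', palW', c1', e1''⟩⟩

/-- For every h: (a) φ(h) = S⁻¹(ψ(0,h))²·(h+1) = R(ψ(0,h))²·(h+1);
(b) φ(h) with its first letter (which is h) and its last letter (which is h+1)
removed is a palindrome. -/
theorem phi_letter_symmetry (h : ℕ) :
    phi h = sInv (psi 0 h) ++ sInv (psi 0 h) ++ [h + 1] ∧
    phi h = (psi 0 h).reverse ++ (psi 0 h).reverse ++ [h + 1] ∧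
    (phi h).dropLast.tail.reverse = (phi h).dropLast.tail := by
  obtain ⟨A, B, _, _, FORM, _, _⟩ := master h
  have hpsi : psi 0 h = uw h := by simp [psi, uw]
  have hsinv : sInv (psi 0 h) = h :: dw h := by
    rw [hpsi]
    conv_lhs => rw [A]
    exact sInv_concat _ _
  have hrev : (psi 0 h).reverse = h :: dw h := by
    rw [hpsi, A]
    simp [B]
  refine ⟨?_, ?_, ?_⟩
  · rw [hsinv, FORM]; simp [List.append_assoc]
  · rw [hrev, FORM]; simp [List.append_assoc]
  · rw [FORM, List.dropLast_concat, List.tail_cons]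
    simp [B, List.append_assoc]
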